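/- arXiv:2408.08961 — 5 statements merged into one kernel-verified Lean document; each statement's English description precedes it below -/
import Mathlib

section
/- Let A be a unital complex Banach algebra and let a ∈ A be power-bounded (i.e. sup_{n∈ℕ} ‖aⁿ‖ < ∞). For each λ ∈ ℂ with |λ| = 1 the following are equivalent: (a) λ ∈ σ(a); (b) λ is an approximate eigenvalue of a, i.e. there exists a sequence (cₙ) in A with ‖cₙ‖ = 1 for all n and (λ·1 − a)cₙ → 0; (c) the left ideal A(λ·1 − a) is not equal to A; (d) the right ideal (λ·1 − a)A is not equal to A; (e) for every closed subalgebra B of A with 1 ∈ B, a ∈ B and B commutative, there exists an algebra character ψ : B → ℂ (nonzero, multiplicative, linear, continuous) with ψ(a) = λ; (f) there exists such a closed commutative unital subalgebra B containing a and an algebra character ψ on B with ψ(a) = λ; (g) for every complex polynomial p one has |p(λ)| ≤ ‖p(a)‖. -/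
/-!
Since the powers of `a` are bounded, `σ(a)` lies in the closed unit disc, so a spectral value `λ`
on the unit circle is a boundary point of `σ(a)`. Take `μₙ → λ` with `μₙ ∉ σ(a)`: every element
within `‖(μₙ - a)⁻¹‖⁻¹` of `μₙ - a` is invertible but `λ - a` is not, so
`‖(μₙ - a)⁻¹‖ ≥ 1 / (|λ - μₙ| ‖1‖)`, and the normalised resolvents are approximate eigenvectors
of `λ - a` from both sides, which rules out one-sided inverses. Gelfand theory produces the
characters, characters are contractive, and conversely, if `λ ∉ σ(a)`, the polynomials
`pₙ = (λⁿ - Xⁿ) / (λ - X)` satisfy `|pₙ(λ)| = n` while `pₙ(a) = (λⁿ - aⁿ)(λ - a)⁻¹` stays bounded.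
-/

open Filter Topology Metric Polynomial WeakDual

section UnitsNear

variable {A : Type*} [NormedRing A] [CompleteSpace A]

theorem inv_norm_inv_le_norm_sub (u : Aˣ) {x : A} (hx : ¬IsUnit x) :
    ‖(↑u⁻¹ : A)‖⁻¹ ≤ ‖x - u‖ := by
  by_contra! h
  exact hx (by simpa using (u.add (x - u) h).isUnit)

variable [NormedAlgebra ℝ A]

theorem exists_norm_eq_one_norm_mul_le (u : Aˣ) {x : A} (hx : ¬IsUnit x) :
    ∃ c : A, ‖c‖ = 1 ∧ ‖x * c‖ ≤ (‖(1 : A)‖ + 1) * ‖x - u‖ ∧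
      ‖c * x‖ ≤ (‖(1 : A)‖ + 1) * ‖x - u‖ := by
  have : Nontrivial A :=
    not_subsingleton_iff_nontrivial.mp fun _ => hx (isUnit_of_subsingleton x)
  set v : A := ↑u⁻¹
  have hv : ‖v‖ ≠ 0 := norm_ne_zero_iff.mpr u⁻¹.ne_zero
  have hdist := inv_norm_inv_le_norm_sub u hx
  have hscale : ∀ w : A, ‖w‖ ≤ ‖(1 : A)‖ + ‖x - u‖ * ‖v‖ →
      ‖‖v‖⁻¹ • w‖ ≤ (‖(1 : A)‖ + 1) * ‖x - u‖ := fun w hw => by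
    rw [norm_smul, norm_inv, norm_norm]
    calc ‖v‖⁻¹ * ‖w‖ ≤ ‖v‖⁻¹ * (‖(1 : A)‖ + ‖x - u‖ * ‖v‖) := by gcongr
      _ = ‖v‖⁻¹ * ‖(1 : A)‖ + ‖x - u‖ := by field_simp
      _ ≤ ‖x - u‖ * ‖(1 : A)‖ + ‖x - u‖ := by gcongr
      _ = (‖(1 : A)‖ + 1) * ‖x - u‖ := by ring
  refine ⟨‖v‖⁻¹ • v, by rw [norm_smul, norm_inv, norm_norm, inv_mul_cancel₀ hv], ?_, ?_⟩
  · rw [mul_smul_comm, show x * v = 1 + (x - u) * v by simp [v, sub_mul]]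
    exact hscale _ ((norm_add_le _ _).trans (by gcongr; exact norm_mul_le _ _))
  · rw [smul_mul_assoc, show v * x = 1 + v * (x - u) by simp [v, mul_sub]]
    refine hscale _ ((norm_add_le _ _).trans ?_)
    gcongr
    exact (norm_mul_le _ _).trans_eq (mul_comm _ _)

theorem exists_seq_norm_eq_one_of_tendsto_units {x : A} (hx : ¬IsUnit x) {u : ℕ → Aˣ}
    (hu : Tendsto (fun n => (u n : A)) atTop (𝓝 x)) :
    ∃ c : ℕ → A, (∀ n, ‖c n‖ = 1) ∧ Tendsto (fun n => x * c n) atTop (𝓝 0) ∧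
      Tendsto (fun n => c n * x) atTop (𝓝 0) := by
  choose c hc hxc hcx using fun n => exists_norm_eq_one_norm_mul_le (u n) hx
  have hbound : Tendsto (fun n => (‖(1 : A)‖ + 1) * ‖x - u n‖) atTop (𝓝 0) := by
    simpa [norm_sub_rev] using
      (tendsto_iff_norm_sub_tendsto_zero.mp hu).const_mul (‖(1 : A)‖ + 1)
  exact ⟨c, hc, squeeze_zero_norm hxc hbound, squeeze_zero_norm hcx hbound⟩

end UnitsNear

section Spectrum

variable {𝕜 A : Type*} [NormedField 𝕜] [NormedRing A] [NormedAlgebra 𝕜 A] [CompleteSpace A]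

theorem spectrum_subset_closedBall_one_of_norm_pow_le {a : A} {M : ℝ}
    (hM : ∀ n : ℕ, ‖a ^ n‖ ≤ M) : spectrum 𝕜 a ⊆ closedBall 0 1 := by
  intro μ hμ
  rw [mem_closedBall_zero_iff]
  by_contra! h
  obtain ⟨n, hn⟩ := pow_unbounded_of_one_lt (M * ‖(1 : A)‖) h
  have := spectrum.norm_le_norm_mul_of_mem (spectrum.pow_mem_pow a n hμ)
  rw [norm_pow] at this
  nlinarith [hM n, norm_nonneg (1 : A)]

theorem spectrum.exists_seq_norm_eq_one_of_mem_frontier [NormedAlgebra ℝ A] {a : A} {μ : 𝕜}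
    (hμ : μ ∈ frontier (spectrum 𝕜 a)) :
    ∃ c : ℕ → A, (∀ n, ‖c n‖ = 1) ∧
      Tendsto (fun n => (algebraMap 𝕜 A μ - a) * c n) atTop (𝓝 0) ∧
      Tendsto (fun n => c n * (algebraMap 𝕜 A μ - a)) atTop (𝓝 0) := by
  have hμa : μ ∈ spectrum 𝕜 a := (spectrum.isClosed a).frontier_subset hμ
  rw [← frontier_compl] at hμ
  obtain ⟨ν, hν, hνμ⟩ := mem_closure_iff_seq_limit.mp (frontier_subset_closure hμ)
  choose u hu using fun n => spectrum.notMem_iff.mp (hν n)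
  refine exists_seq_norm_eq_one_of_tendsto_units (spectrum.mem_iff.mp hμa) (u := u) ?_
  simp only [hu]
  exact (((continuous_algebraMap 𝕜 A).tendsto μ).comp hνμ).sub_const a

end Spectrum

theorem mem_frontier_of_subset_closedBall_of_norm_eq_one {E : Type*} [NormedAddCommGroup E]
    [NormedSpace ℝ E] {s : Set E} (hs : s ⊆ closedBall 0 1) {x : E} (hx : x ∈ s)
    (hx1 : ‖x‖ = 1) : x ∈ frontier s := by
  refine ⟨subset_closure hx, fun hint => ?_⟩
  have := interior_mono hs hint
  rw [interior_closedBall _ one_ne_zero, mem_ball_zero_iff, hx1] at this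
  exact lt_irrefl _ this

section OneSidedInverses

variable {A : Type*} [NormedRing A]

theorem not_tendsto_zero_of_norm_eq_one {c : ℕ → A} (hc : ∀ n, ‖c n‖ = 1) :
    ¬Tendsto c atTop (𝓝 0) := fun h => by
  have := h.norm
  simp only [hc, norm_zero] at this
  exact one_ne_zero (tendsto_nhds_unique tendsto_const_nhds this)

theorem range_mul_right_ne_univ_of_tendsto {x : A} {c : ℕ → A} (hc : ∀ n, ‖c n‖ = 1)
    (hxc : Tendsto (fun n => x * c n) atTop (𝓝 0)) : Set.range (· * x) ≠ Set.univ := by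
  intro h
  obtain ⟨b, hb⟩ : (1 : A) ∈ Set.range (· * x) := h ▸ Set.mem_univ 1
  refine not_tendsto_zero_of_norm_eq_one hc ?_
  simpa [← mul_assoc, hb] using hxc.const_mul b

theorem range_mul_left_ne_univ_of_tendsto {x : A} {c : ℕ → A} (hc : ∀ n, ‖c n‖ = 1)
    (hcx : Tendsto (fun n => c n * x) atTop (𝓝 0)) : Set.range (x * ·) ≠ Set.univ := by
  intro h
  obtain ⟨b, hb⟩ : (1 : A) ∈ Set.range (x * ·) := h ▸ Set.mem_univ 1
  refine not_tendsto_zero_of_norm_eq_one hc ?_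
  simpa [mul_assoc, hb] using hcx.mul_const b

end OneSidedInverses

section Characters

variable {𝕜 B : Type*} [NontriviallyNormedField 𝕜] [NormedRing B] [NormedAlgebra 𝕜 B]
  [CompleteSpace B]

/-- If `‖y‖ < 1` then `1 - y` is a unit, so no character takes the value `1` on `y`. -/
theorem AlgHom.norm_apply_le (φ : B →ₐ[𝕜] 𝕜) (x : B) : ‖φ x‖ ≤ ‖x‖ := by
  by_contra! h
  have hφx : φ x ≠ 0 := norm_pos_iff.mp ((norm_nonneg x).trans_lt h)
  set y := (φ x)⁻¹ • x
  have hy : ‖y‖ < 1 := by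
    rwa [norm_smul, norm_inv, inv_mul_lt_one₀ (norm_pos_iff.mpr hφx)]
  have := ((Units.oneSub y hy).isUnit).map φ
  simp [y, hφx] at this

theorem AlgHom.norm_eval_le_norm_aeval (φ : B →ₐ[𝕜] 𝕜) (x : B) (p : 𝕜[X]) :
    ‖p.eval (φ x)‖ ≤ ‖aeval x p‖ := by
  have := φ.norm_apply_le (aeval x p)
  rwa [← aeval_algHom_apply, coe_aeval_eq_eval] at this

end Characters

theorem Subalgebra.exists_characterSpace_apply_eq_of_mem_spectrum {A : Type*} [NormedRing A]
    [NormedAlgebra ℂ A] [CompleteSpace A] {B : Subalgebra ℂ A} (hB : IsClosed (B : Set A))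
    (hcomm : ∀ x y : B, x * y = y * x) {x : B} {μ : ℂ} (hμ : μ ∈ spectrum ℂ (x : A)) :
    ∃ φ : characterSpace ℂ B, φ x = μ := by
  let _ : NormedCommRing B := { (inferInstance : NormedRing B) with mul_comm := hcomm }
  have : CompleteSpace B := hB.completeSpace_coe
  exact CharacterSpace.mem_spectrum_iff_exists.mp (spectrum.subset_subalgebra x hμ)

theorem mem_spectrum_of_forall_norm_eval_le_norm_aeval {A : Type*} [NormedRing A]
    [NormedAlgebra ℂ A] {a : A} {M : ℝ} (hM : ∀ n : ℕ, ‖a ^ n‖ ≤ M) {μ : ℂ} (hμ : ‖μ‖ = 1)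
    (h : ∀ p : ℂ[X], ‖p.eval μ‖ ≤ ‖aeval a p‖) : μ ∈ spectrum ℂ a := by
  by_contra hμa
  obtain ⟨u, hu⟩ := spectrum.notMem_iff.mp hμa
  obtain ⟨n, hn⟩ := exists_nat_gt ((‖(1 : A)‖ + M) * ‖(↑u⁻¹ : A)‖)
  set p : ℂ[X] := ∑ i ∈ Finset.range n, C μ ^ i * X ^ (n - 1 - i)
  have h_eval : ‖p.eval μ‖ = n := by
    simp only [p, eval_finsetSum, eval_mul, eval_pow, eval_C, eval_X, geom_sum₂_self]
    simp [hμ]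
  have h_aeval : aeval a p = (algebraMap ℂ A μ ^ n - a ^ n) * ↑u⁻¹ := by
    rw [Units.eq_mul_inv_iff_mul_eq, hu]
    simpa [p] using congr(aeval a $(geom_sum₂_mul (C μ) X n))
  have h_norm : ‖aeval a p‖ ≤ (‖(1 : A)‖ + M) * ‖(↑u⁻¹ : A)‖ := by
    have h_one : ‖algebraMap ℂ A μ ^ n‖ = ‖(1 : A)‖ := by
      rw [← map_pow, norm_algebraMap, norm_pow, hμ, one_pow, one_mul]
    calc ‖aeval a p‖ ≤ ‖algebraMap ℂ A μ ^ n - a ^ n‖ * ‖(↑u⁻¹ : A)‖ :=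
          h_aeval ▸ norm_mul_le _ _
      _ ≤ (‖algebraMap ℂ A μ ^ n‖ + ‖a ^ n‖) * ‖(↑u⁻¹ : A)‖ := by gcongr; exact norm_sub_le _ _
      _ ≤ (‖(1 : A)‖ + M) * ‖(↑u⁻¹ : A)‖ := by rw [h_one]; gcongr; exact hM n
  linarith [h p]

/-- For a power-bounded element `a` of a unital complex Banach algebra `A`
and `λ ∈ ℂ` with `|λ| = 1`, the following are equivalent:
(a) `λ ∈ σ(a)`; (b) `λ` is an approximate eigenvalue of `a`; (c) the left ideal
`A(λ·1 − a)` is not all of `A`; (d) the right ideal `(λ·1 − a)A` is not all of `A`;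
(e) every closed commutative unital subalgebra `B` containing `a` admits an algebra
character `ψ` with `ψ(a) = λ`; (f) some such subalgebra admits such a character;
(g) `|p(λ)| ≤ ‖p(a)‖` for every complex polynomial `p`. -/
theorem unitary_spectrum_of_element_tfae
    {A : Type*} [NormedRing A] [NormedAlgebra ℂ A] [CompleteSpace A]
    (a : A) (hpb : ∃ M : ℝ, ∀ n : ℕ, ‖a ^ n‖ ≤ M)
    (lam : ℂ) (hlam : ‖lam‖ = 1) :
    List.TFAE [
      -- (a) λ ∈ σ(a)
      lam ∈ spectrum ℂ a,
      -- (b) approximate eigenvalue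
      ∃ c : ℕ → A, (∀ n, ‖c n‖ = 1) ∧
        Tendsto (fun n => (algebraMap ℂ A lam - a) * c n) atTop (𝓝 0),
      -- (c) the left ideal A(λ - a) is not all of A
      (Set.range fun b : A => b * (algebraMap ℂ A lam - a)) ≠ Set.univ,
      -- (d) the right ideal (λ - a)A is not all of A
      (Set.range fun b : A => (algebraMap ℂ A lam - a) * b) ≠ Set.univ,
      -- (e) characters on every closed commutative unital subalgebra containing a
      ∀ B : Subalgebra ℂ A, IsClosed (B : Set A) → (∀ x y : B, x * y = y * x) →
        ∀ ha : a ∈ B, ∃ ψ : B →L[ℂ] ℂ, ψ ≠ 0 ∧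
          (∀ x y : B, ψ (x * y) = ψ x * ψ y) ∧ ψ ⟨a, ha⟩ = lam,
      -- (f) a character on some closed commutative unital subalgebra containing a
      ∃ B : Subalgebra ℂ A, IsClosed (B : Set A) ∧ (∀ x y : B, x * y = y * x) ∧
        ∃ ha : a ∈ B, ∃ ψ : B →L[ℂ] ℂ, ψ ≠ 0 ∧
          (∀ x y : B, ψ (x * y) = ψ x * ψ y) ∧ ψ ⟨a, ha⟩ = lam,
      -- (g) |p(λ)| ≤ ‖p(a)‖ for all polynomials p
      ∀ p : Polynomial ℂ, ‖p.eval lam‖ ≤ ‖(Polynomial.aeval a) p‖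
    ] := by
  obtain ⟨M, hM⟩ := hpb
  have h_approx := fun h : lam ∈ spectrum ℂ a =>
    spectrum.exists_seq_norm_eq_one_of_mem_frontier <|
      mem_frontier_of_subset_closedBall_of_norm_eq_one
        (spectrum_subset_closedBall_one_of_norm_pow_le hM) h hlam
  tfae_have 1 → 2 := fun h =>
    let ⟨c, hc, hxc, _⟩ := h_approx h
    ⟨c, hc, hxc⟩
  tfae_have 2 → 3 := fun ⟨c, hc, hxc⟩ => range_mul_right_ne_univ_of_tendsto hc hxc
  tfae_have 1 → 4 := fun h =>
    let ⟨c, hc, _, hcx⟩ := h_approx h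
    range_mul_left_ne_univ_of_tendsto hc hcx
  tfae_have 3 → 1 := fun h => by
    by_contra h1
    obtain ⟨u, hu⟩ := spectrum.notMem_iff.mp h1
    exact h (hu ▸ u.mulRight_bijective.surjective.range_eq)
  tfae_have 4 → 1 := fun h => by
    by_contra h1
    obtain ⟨u, hu⟩ := spectrum.notMem_iff.mp h1
    exact h (hu ▸ u.mulLeft_bijective.surjective.range_eq)
  tfae_have 1 → 5 := fun h B hB hcomm ha =>
    let ⟨φ, hφ⟩ := Subalgebra.exists_characterSpace_apply_eq_of_mem_spectrum hB hcomm
      (x := ⟨a, ha⟩) h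
    ⟨(φ : WeakDual ℂ B), φ.2.1, φ.2.2, hφ⟩
  tfae_have 5 → 6 := fun h =>
    ⟨_, Algebra.elemental.isClosed ℂ a, mul_comm, Algebra.elemental.self_mem ℂ a,
      h _ (Algebra.elemental.isClosed ℂ a) mul_comm _⟩
  tfae_have 6 → 7 := by
    rintro ⟨B, hB, -, ha, ψ, hψ0, hψmul, hψa⟩ p
    have : CompleteSpace B := hB.completeSpace_coe
    let φ := CharacterSpace.toAlgHom ⟨(ψ : WeakDual ℂ B), hψ0, hψmul⟩
    have hφa : φ ⟨a, ha⟩ = lam := hψa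
    calc ‖p.eval lam‖ = ‖p.eval (φ ⟨a, ha⟩)‖ := by rw [hφa]
      _ ≤ ‖((aeval (⟨a, ha⟩ : B) p : B) : A)‖ := φ.norm_eval_le_norm_aeval _ p
      _ = ‖aeval a p‖ := by rw [aeval_subalgebra_coe]
  tfae_have 7 → 1 := mem_spectrum_of_forall_norm_eval_le_norm_aeval hM hlam
  tfae_finish
end

section
/- Let S be a commutative monoid, A a unital complex Banach algebra, and T : S → A a bounded representation. The following are equivalent: (a) σ_uni(T) = ∅; (b) there is an s ∈ S with T(s)ⁿ → 0 in A as n → ∞; (c) 0 lies in the norm closure of T(S) in A; (d) the net (T(s))_{s∈S} converges to 0 in norm, i.e. for every ε > 0 there is s₀ ∈ S such that ‖T(s)‖ ≤ ε for every s ∈ S with s₀ ≤ s; (e) there is an s ∈ S with ‖T(s)‖ < 1. -/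
open Filter Topology

universe u

section Defs

variable {S : Type*} [AddCommMonoid S]

/-- A representation of a commutative monoid `S` in a monoid `A`. -/
def IsRepresentation {A : Type*} [Monoid A] (T : S → A) : Prop :=
  T 0 = 1 ∧ ∀ s t : S, T (s + t) = T s * T t

/-- A bounded representation. -/
def IsBoundedRep {A : Type*} [Monoid A] [Norm A] (T : S → A) : Prop :=
  IsRepresentation T ∧ ∃ M : ℝ, ∀ s : S, ‖T s‖ ≤ M

/-- A unitary semigroup character of `S`. -/
def IsUnitaryChar (χ : S → ℂ) : Prop :=
  χ 0 = 1 ∧ (∀ s t : S, χ (s + t) = χ s * χ t) ∧ ∀ s : S, ‖χ s‖ = 1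

/-- Membership in the unitary spectrum of a bounded representation:
`χ` is a unitary semigroup character satisfying
`|∑ₖ βₖ χ(sₖ)| ≤ ‖∑ₖ βₖ T(sₖ)‖` for all finite families. -/
def InUniSpec {A : Type*} [NormedRing A] [NormedAlgebra ℂ A] (T : S → A) (χ : S → ℂ) : Prop :=
  IsUnitaryChar χ ∧ ∀ (n : ℕ) (s : Fin n → S) (β : Fin n → ℂ),
    ‖∑ k, β k * χ (s k)‖ ≤ ‖∑ k, β k • T (s k)‖

/-- A directed index set for nets: a nonempty preordered set in which every pair
of elements has an upper bound. -/
structure DirIdx : Type (u + 1) where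
  J : Type u
  r : J → J → Prop
  refl : ∀ j, r j j
  trans : ∀ {a b c}, r a b → r b c → r a c
  directed : ∀ a b, ∃ k, r a k ∧ r b k
  nonempty : Nonempty J

/-- Convergence of a net in a (semi)normed additive group. -/
def TendstoAlong {A : Type*} [SeminormedAddGroup A] (D : DirIdx.{u}) (f : D.J → A) (L : A) : Prop :=
  ∀ ε > 0, ∃ j₀ : D.J, ∀ j : D.J, D.r j₀ j → ‖f j - L‖ ≤ ε

end Defs

/-! The hard implication is (a) → (e). Suppose `‖T s‖ ≥ 1` for all `s` and let `Φ : ℂ[S] → A` be the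
induced homomorphism. The seminorm `x ↦ limsup_s ‖T s * Φ x‖` on `ℂ[S]` is submultiplicative,
because `T s` commutes with `Φ x`; its completion `B` is a commutative Banach algebra in which
`1 ≤ ‖δ_s ^ n‖ ≤ M` for all `n`. Hence every character of `B` has `|φ δ_s| ≤ 1`, while Gelfand's
formula yields, for each `s`, a character with `|φ δ_s| ≥ 1`. As `|φ δ_{s+t}| ≥ 1` forces
`|φ δ_s| ≥ 1`, these sets of characters form a directed family of closed subsets of the compact
character space, so one character `φ` is unimodular on every `δ_s`. Finally
`|φ x| ≤ lim ‖x ^ n‖ ^ (1/n) ≤ ‖Φ x‖`, so `s ↦ φ δ_s` lies in the unitary spectrum. -/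

lemma le_one_of_forall_pow_le {u C : ℝ} (h : ∀ n : ℕ, u ^ n ≤ C) : u ≤ 1 := by
  by_contra! hu
  obtain ⟨n, hn⟩ := ((tendsto_pow_atTop_atTop_of_one_lt hu).eventually_gt_atTop C).exists
  exact (h n).not_gt hn

lemma le_of_forall_pow_le_mul_pow {u v C : ℝ} (hv : 0 ≤ v) (h : ∀ n : ℕ, u ^ n ≤ C * v ^ n) :
    u ≤ v := by
  rcases hv.eq_or_lt with rfl | hv
  · simpa using h 1
  · rw [← div_le_one hv]
    refine le_one_of_forall_pow_le (C := C) fun n => ?_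
    rw [div_pow, div_le_iff₀ (pow_pos hv n)]
    exact h n

lemma norm_apply_le_of_norm_pow_le {𝕜 B F : Type*} [NormedField 𝕜] [NormedRing B]
    [NormedAlgebra 𝕜 B] [CompleteSpace B] [FunLike F B 𝕜] [AlgHomClass F 𝕜 B 𝕜] (φ : F) {b : B}
    {K c : ℝ} (hc : 0 ≤ c) (h : ∀ n : ℕ, ‖b ^ n‖ ≤ K * c ^ n) : ‖φ b‖ ≤ c := by
  refine le_of_forall_pow_le_mul_pow hc (C := K * ‖(1 : B)‖) fun n => ?_
  calc ‖φ b‖ ^ n = ‖φ (b ^ n)‖ := by rw [map_pow, norm_pow]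
    _ ≤ ‖b ^ n‖ * ‖(1 : B)‖ := AlgHom.norm_apply_le_self_mul_norm_one φ _
    _ ≤ K * c ^ n * ‖(1 : B)‖ := by gcongr; exact h n
    _ = K * ‖(1 : B)‖ * c ^ n := by ring

lemma exists_characterSpace_one_le_norm_apply {B : Type*} [NormedCommRing B] [NormedAlgebra ℂ B]
    [CompleteSpace B] {b : B} (h : ∀ n : ℕ, 1 ≤ ‖b ^ n‖) :
    ∃ φ : WeakDual.characterSpace ℂ B, 1 ≤ ‖φ b‖ := by
  have : Nontrivial B := ⟨⟨1, 0, fun h₁ => absurd (h 0) (by simp [h₁])⟩⟩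
  have hρ : 1 ≤ spectralRadius ℂ b :=
    ge_of_tendsto (spectrum.pow_norm_pow_one_div_tendsto_nhds_spectralRadius b) <|
      Eventually.of_forall fun n =>
        ENNReal.one_le_ofReal.2 (Real.one_le_rpow (h n) (by positivity))
  obtain ⟨z, hz, hzρ⟩ := spectrum.exists_nnnorm_eq_spectralRadius b
  obtain ⟨φ, rfl⟩ := WeakDual.CharacterSpace.mem_spectrum_iff_exists.mp hz
  rw [← hzρ] at hρ
  exact ⟨φ, by exact_mod_cast hρ⟩

lemma exists_forall_norm_eq_one_of_map_add {X S 𝕜 : Type*} [TopologicalSpace X] [CompactSpace X]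
    [Add S] [Nonempty S] [NormedField 𝕜] (f : S → X → 𝕜) (hf : ∀ s, Continuous (f s))
    (hadd : ∀ s t x, f (s + t) x = f s x * f t x) (hle : ∀ s x, ‖f s x‖ ≤ 1)
    (hex : ∀ s, ∃ x, 1 ≤ ‖f s x‖) : ∃ x, ∀ s, ‖f s x‖ = 1 := by
  let K : S → Set X := fun s => {x | 1 ≤ ‖f s x‖}
  have hclosed : ∀ s, IsClosed (K s) := fun s => isClosed_le continuous_const (hf s).norm
  have hdir : Directed (· ⊇ ·) K := fun s t =>
    ⟨s + t, fun x (hx : 1 ≤ ‖f (s + t) x‖) => by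
        rw [hadd, norm_mul] at hx
        exact hx.trans (mul_le_of_le_one_right (norm_nonneg _) (hle t x)),
      fun x (hx : 1 ≤ ‖f (s + t) x‖) => by
        rw [hadd, norm_mul] at hx
        exact hx.trans (mul_le_of_le_one_left (norm_nonneg _) (hle s x))⟩
  obtain ⟨x, hx⟩ := IsCompact.nonempty_iInter_of_directed_nonempty_isCompact_isClosed K hdir
    hex (fun s => (hclosed s).isCompact) hclosed
  exact ⟨x, fun s => (hle s x).antisymm (Set.mem_iInter.1 hx s)⟩

section TailNorm

variable {S A : Type*} [AddCommMonoid S] [NormedRing A]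

noncomputable def tailSup (T : S → A) (a : A) (s₀ : S) : ℝ := ⨆ r, ‖T (s₀ + r) * a‖

/-- `lim sup_s ‖T s * a‖` along the divisibility direction of `S`. -/
noncomputable def tailNorm (T : S → A) (a : A) : ℝ := ⨅ s₀, tailSup T a s₀

variable {T : S → A} {M : ℝ}

lemma tailSup_nonneg (a : A) (s₀ : S) : 0 ≤ tailSup T a s₀ :=
  Real.iSup_nonneg fun _ => norm_nonneg _

lemma tailNorm_nonneg (a : A) : 0 ≤ tailNorm T a :=
  Real.iInf_nonneg fun s₀ => tailSup_nonneg a s₀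

lemma norm_mul_le_tailSup (hM : ∀ s, ‖T s‖ ≤ M) (a : A) (s₀ r : S) :
    ‖T (s₀ + r) * a‖ ≤ tailSup T a s₀ :=
  le_ciSup ⟨M * ‖a‖, Set.forall_mem_range.2 fun _ =>
    (norm_mul_le _ _).trans (mul_le_mul_of_nonneg_right (hM _) (norm_nonneg a))⟩ r

lemma tailSup_le {a : A} {s₀ : S} {c : ℝ} (h : ∀ r, ‖T (s₀ + r) * a‖ ≤ c) :
    tailSup T a s₀ ≤ c :=
  ciSup_le h

lemma tailNorm_le_tailSup (a : A) (s₀ : S) : tailNorm T a ≤ tailSup T a s₀ :=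
  ciInf_le ⟨0, Set.forall_mem_range.2 (tailSup_nonneg a)⟩ s₀

lemma tailNorm_le_of_forall_norm_mul_le {a : A} {c : ℝ} (h : ∀ s, ‖T s * a‖ ≤ c) :
    tailNorm T a ≤ c :=
  (tailNorm_le_tailSup a 0).trans (tailSup_le fun r => by rw [zero_add]; exact h r)

lemma le_tailNorm_of_forall_le_norm_mul (hM : ∀ s, ‖T s‖ ≤ M) {a : A} {c : ℝ}
    (h : ∀ s, c ≤ ‖T s * a‖) : c ≤ tailNorm T a :=
  le_ciInf fun s₀ => (h (s₀ + 0)).trans (norm_mul_le_tailSup hM a s₀ 0)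

lemma tailSup_add_right_le (hM : ∀ s, ‖T s‖ ≤ M) (a : A) (s₀ t : S) :
    tailSup T a (s₀ + t) ≤ tailSup T a s₀ :=
  tailSup_le fun r => by rw [add_assoc]; exact norm_mul_le_tailSup hM a s₀ (t + r)

lemma tailNorm_zero : tailNorm T (0 : A) = 0 :=
  (tailNorm_le_of_forall_norm_mul_le fun s => by simp).antisymm (tailNorm_nonneg 0)

lemma tailNorm_neg (a : A) : tailNorm T (-a) = tailNorm T a := by
  simp only [tailNorm, tailSup, mul_neg, norm_neg]

lemma tailNorm_add_le (hM : ∀ s, ‖T s‖ ≤ M) (a b : A) :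
    tailNorm T (a + b) ≤ tailNorm T a + tailNorm T b := by
  refine le_ciInf_add_ciInf fun s₀ s₁ => ?_
  calc tailNorm T (a + b) ≤ tailSup T (a + b) (s₀ + s₁) := tailNorm_le_tailSup _ _
    _ ≤ tailSup T a (s₀ + s₁) + tailSup T b (s₀ + s₁) := tailSup_le fun r => by
        rw [mul_add]
        exact (norm_add_le _ _).trans
          (add_le_add (norm_mul_le_tailSup hM a _ r) (norm_mul_le_tailSup hM b _ r))
    _ ≤ tailSup T a s₀ + tailSup T b s₁ := by
        rw [add_comm s₀ s₁]
        exact add_le_add (by rw [add_comm]; exact tailSup_add_right_le hM a s₀ s₁)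
          (tailSup_add_right_le hM b s₁ s₀)

lemma tailNorm_smul_le {𝕜 : Type*} [NormedField 𝕜] [NormedAlgebra 𝕜 A] (hM : ∀ s, ‖T s‖ ≤ M)
    (c : 𝕜) (a : A) : tailNorm T (c • a) ≤ ‖c‖ * tailNorm T a := by
  conv_rhs => rw [tailNorm, Real.mul_iInf_of_nonneg (norm_nonneg c)]
  refine le_ciInf fun s₀ => (tailNorm_le_tailSup _ s₀).trans (tailSup_le fun r => ?_)
  rw [mul_smul_comm, norm_smul]
  exact mul_le_mul_of_nonneg_left (norm_mul_le_tailSup hM a s₀ r) (norm_nonneg c)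

lemma tailNorm_mul_le (hT : IsRepresentation T) (hM : ∀ s, ‖T s‖ ≤ M) {a : A}
    (ha : ∀ u, Commute (T u) a) (b : A) : tailNorm T (a * b) ≤ tailNorm T a * tailNorm T b := by
  have key : ∀ s₀ s₁, tailNorm T (a * b) ≤ tailSup T a s₀ * tailSup T b s₁ := fun s₀ s₁ =>
    (tailNorm_le_tailSup _ (s₀ + s₁)).trans <| tailSup_le fun r => calc
      ‖T (s₀ + s₁ + r) * (a * b)‖ = ‖(T (s₀ + r) * a) * (T (s₁ + 0) * b)‖ := by
        rw [add_zero, add_right_comm, hT.2, mul_assoc, ← mul_assoc (T s₁), (ha s₁).eq,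
          mul_assoc, mul_assoc]
      _ ≤ ‖T (s₀ + r) * a‖ * ‖T (s₁ + 0) * b‖ := norm_mul_le _ _
      _ ≤ tailSup T a s₀ * tailSup T b s₁ :=
        mul_le_mul (norm_mul_le_tailSup hM a s₀ r) (norm_mul_le_tailSup hM b s₁ 0)
          (norm_nonneg _) (tailSup_nonneg a s₀)
  conv_rhs => rw [tailNorm, Real.iInf_mul_of_nonneg (tailNorm_nonneg b)]
  refine le_ciInf fun s₀ => ?_
  conv_rhs => rw [tailNorm, Real.mul_iInf_of_nonneg (tailSup_nonneg a s₀)]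
  exact le_ciInf (key s₀)

lemma tailNorm_pow_le (hM : ∀ s, ‖T s‖ ≤ M) (a : A) (n : ℕ) : tailNorm T (a ^ n) ≤ M * ‖a‖ ^ n :=
  tailNorm_le_of_forall_norm_mul_le fun s => by
    induction n with
    | zero => simpa using hM s
    | succ n ih =>
      rw [pow_succ, ← mul_assoc, pow_succ, ← mul_assoc]
      exact (norm_mul_le _ _).trans (mul_le_mul_of_nonneg_right ih (norm_nonneg a))

lemma tailNorm_apply_le (hT : IsRepresentation T) (hM : ∀ s, ‖T s‖ ≤ M) (u : S) :
    tailNorm T (T u) ≤ M :=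
  tailNorm_le_of_forall_norm_mul_le fun s => by rw [← hT.2]; exact hM _

lemma one_le_tailNorm_apply (hT : IsRepresentation T) (hM : ∀ s, ‖T s‖ ≤ M)
    (h₁ : ∀ s, 1 ≤ ‖T s‖) (u : S) : 1 ≤ tailNorm T (T u) :=
  le_tailNorm_of_forall_le_norm_mul hM fun s => by rw [← hT.2]; exact h₁ _

end TailNorm

namespace IsRepresentation

variable {S A : Type*} [AddCommMonoid S] [Semiring A] {T : S → A}

lemma map_nsmul (hT : IsRepresentation T) (n : ℕ) (s : S) : T (n • s) = T s ^ n := by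
  induction n with
  | zero => rw [zero_nsmul, pow_zero, hT.1]
  | succ n ih => rw [succ_nsmul, hT.2, ih, pow_succ]

variable (𝕜 : Type*) [CommSemiring 𝕜] [Algebra 𝕜 A]

noncomputable def algHom (hT : IsRepresentation T) : AddMonoidAlgebra 𝕜 S →ₐ[𝕜] A :=
  AddMonoidAlgebra.lift 𝕜 A S
    { toFun s := T s.toAdd
      map_one' := hT.1
      map_mul' s t := hT.2 s.toAdd t.toAdd }

lemma algHom_single (hT : IsRepresentation T) (s : S) :
    hT.algHom 𝕜 (AddMonoidAlgebra.single s 1) = T s := by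
  simp [algHom]

lemma commute_algHom (hT : IsRepresentation T) (u : S) (x : AddMonoidAlgebra 𝕜 S) :
    Commute (T u) (hT.algHom 𝕜 x) := by
  induction x using AddMonoidAlgebra.induction_on with
  | of s =>
    rw [← AddMonoidAlgebra.of'_eq_of, AddMonoidAlgebra.of'_apply, algHom_single, Commute,
      SemiconjBy, ← hT.2, ← hT.2, add_comm]
  | add x y hx hy => rw [map_add]; exact hx.add_right hy
  | smul c x hx => rw [map_smul]; exact hx.smul_right c

end IsRepresentation

noncomputable def UniformSpace.Completion.coeAlgHom {R A : Type*} [CommSemiring R] [Ring A]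
    [UniformSpace A] [IsUniformAddGroup A] [IsTopologicalRing A] [Algebra R A]
    [UniformContinuousConstSMul R A] : A →ₐ[R] UniformSpace.Completion A :=
  { UniformSpace.Completion.coeRingHom with commutes' := fun _ => rfl }

section

variable {S A : Type*} [AddCommMonoid S] [NormedRing A]

/-- `ℂ[S]` with the seminorm `x ↦ tailNorm T (Φ x)`, where `Φ : ℂ[S] → A` is induced by `T`. -/
def TailAlgebra (T : S → A) (_hT : IsBoundedRep T) : Type _ := AddMonoidAlgebra ℂ S

namespace TailAlgebra

variable {T : S → A} {hT : IsBoundedRep T}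

noncomputable instance : CommRing (TailAlgebra T hT) :=
  inferInstanceAs (CommRing (AddMonoidAlgebra ℂ S))

noncomputable instance : Algebra ℂ (TailAlgebra T hT) :=
  inferInstanceAs (Algebra ℂ (AddMonoidAlgebra ℂ S))

variable (hT) in
noncomputable def of (s : S) : TailAlgebra T hT := AddMonoidAlgebra.single s 1

lemma of_add (s t : S) : of hT (s + t) = of hT s * of hT t := by
  have h := AddMonoidAlgebra.single_mul_single s t (1 : ℂ) 1
  rw [mul_one] at h
  exact h.symm

variable [NormedAlgebra ℂ A]

variable (T hT) in
noncomputable def rep : TailAlgebra T hT →ₐ[ℂ] A := hT.1.algHom ℂ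

lemma rep_of (s : S) : rep T hT (of hT s) = T s := hT.1.algHom_single ℂ s

lemma commute_rep (u : S) (x : TailAlgebra T hT) : Commute (T u) (rep T hT x) :=
  hT.1.commute_algHom ℂ u x

variable (T hT) in
noncomputable def seminorm : AddGroupSeminorm (TailAlgebra T hT) where
  toFun x := tailNorm T (rep T hT x)
  map_zero' := by rw [map_zero, tailNorm_zero]
  add_le' x y := by
    obtain ⟨M, hM⟩ := hT.2
    rw [map_add]
    exact tailNorm_add_le hM _ _
  neg' x := by rw [map_neg, tailNorm_neg]

noncomputable instance : SeminormedCommRing (TailAlgebra T hT) :=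
  { (seminorm T hT).toSeminormedAddCommGroup, (inferInstance : CommRing (TailAlgebra T hT)) with
    norm_mul_le x y := by
      obtain ⟨M, hM⟩ := hT.2
      show tailNorm T (rep T hT (x * y)) ≤ _
      rw [map_mul]
      exact tailNorm_mul_le hT.1 hM (fun u => commute_rep u x) _ }

noncomputable instance : NormedAlgebra ℂ (TailAlgebra T hT) :=
  { (inferInstance : Algebra ℂ (TailAlgebra T hT)) with
    norm_smul_le c x := by
      obtain ⟨M, hM⟩ := hT.2
      show tailNorm T (rep T hT (c • x)) ≤ _
      rw [map_smul]
      exact tailNorm_smul_le hM c _ }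

lemma inUniSpec_of_algHom (ψ : TailAlgebra T hT →ₐ[ℂ] ℂ) (hψ₁ : ∀ s, ‖ψ (of hT s)‖ = 1)
    (hψ : ∀ x, ‖ψ x‖ ≤ ‖rep T hT x‖) : InUniSpec T fun s => ψ (of hT s) := by
  refine ⟨⟨by rw [← map_one ψ]; rfl, fun s t => by simp only [of_add, map_mul], hψ₁⟩,
    fun n s β => ?_⟩
  simpa [rep_of] using hψ (∑ k, β k • of hT (s k))

end TailAlgebra

end

open UniformSpace TailAlgebra in
theorem exists_inUniSpec_of_one_le_norm {S A : Type*} [AddCommMonoid S] [NormedRing A]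
    [NormedAlgebra ℂ A] {T : S → A} (hT : IsBoundedRep T) (h₁ : ∀ s, 1 ≤ ‖T s‖) :
    ∃ χ, InUniSpec T χ := by
  obtain ⟨M, hM⟩ := hT.2
  let ι : TailAlgebra T hT →ₐ[ℂ] Completion (TailAlgebra T hT) := Completion.coeAlgHom
  have hι : ∀ x (n : ℕ), ‖ι x ^ n‖ = tailNorm T (rep T hT x ^ n) := fun x n => by
    rw [← map_pow, ← map_pow]; exact Completion.norm_coe _
  have hι_of : ∀ s (n : ℕ), ‖ι (of hT s) ^ n‖ = tailNorm T (T (n • s)) := fun s n => by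
    rw [hι, rep_of, hT.1.map_nsmul]
  obtain ⟨φ, hφ⟩ := exists_forall_norm_eq_one_of_map_add
    (fun s (φ : WeakDual.characterSpace ℂ (Completion (TailAlgebra T hT))) => φ (ι (of hT s)))
    (fun s => (WeakDual.eval_continuous _).comp continuous_subtype_val)
    (fun s t φ => by simp only [of_add, map_mul])
    (fun s φ => norm_apply_le_of_norm_pow_le φ zero_le_one fun n => by
      rw [hι_of, one_pow, mul_one]
      exact tailNorm_apply_le hT.1 hM _)
    (fun s => exists_characterSpace_one_le_norm_apply fun n => by
      rw [hι_of]
      exact one_le_tailNorm_apply hT.1 hM h₁ _)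
  refine ⟨_, inUniSpec_of_algHom ((WeakDual.CharacterSpace.toAlgHom φ).comp ι) hφ fun x => ?_⟩
  exact norm_apply_le_of_norm_pow_le φ (norm_nonneg _) fun n =>
    (hι x n).trans_le (tailNorm_pow_le hM _ n)

section

variable {S A : Type*} [AddCommMonoid S] [NormedRing A] {T : S → A}

lemma IsBoundedRep.exists_forall_norm_le_of_norm_lt_one (hT : IsBoundedRep T) {s : S}
    (hs : ‖T s‖ < 1) {ε : ℝ} (hε : 0 < ε) :
    ∃ s₀ : S, ∀ s : S, (∃ r : S, s₀ + r = s) → ‖T s‖ ≤ ε := by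
  obtain ⟨M, hM⟩ := hT.2
  have hlim : Tendsto (fun n : ℕ => ‖T s‖ ^ (n + 1) * M) atTop (𝓝 0) := by
    simpa using ((tendsto_pow_atTop_nhds_zero_of_lt_one (norm_nonneg _) hs).comp
      (tendsto_add_atTop_nat 1)).mul_const M
  obtain ⟨n, hn⟩ := (hlim.eventually (ge_mem_nhds hε)).exists
  refine ⟨(n + 1) • s, ?_⟩
  rintro _ ⟨r, rfl⟩
  calc ‖T ((n + 1) • s + r)‖ = ‖T s ^ (n + 1) * T r‖ := by rw [hT.1.2, hT.1.map_nsmul]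
    _ ≤ ‖T s‖ ^ (n + 1) * M :=
        (norm_mul_le _ _).trans (mul_le_mul (norm_pow_le' _ n.succ_pos) (hM r) (norm_nonneg _)
          (by positivity))
    _ ≤ ε := hn

lemma not_inUniSpec_of_norm_lt_one [NormedAlgebra ℂ A] {s : S} (hs : ‖T s‖ < 1) (χ : S → ℂ) :
    ¬ InUniSpec T χ := by
  rintro ⟨hχ, hle⟩
  have h := hle 1 (fun _ => s) (fun _ => 1)
  simp only [Fin.sum_univ_one, one_mul, one_smul, hχ.2.2 s] at h
  exact hs.not_ge h

end

theorem stability_tfae_general {S : Type*} [AddCommMonoid S]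
    {A : Type*} [NormedRing A] [NormedAlgebra ℂ A]
    (T : S → A) (hT : IsBoundedRep T) :
    List.TFAE [
      -- (a) empty unitary spectrum
      ∀ χ : S → ℂ, ¬ InUniSpec T χ,
      -- (b) some T(s) has powers tending to 0
      ∃ s : S, Tendsto (fun n : ℕ => T s ^ n) atTop (𝓝 0),
      -- (c) 0 belongs to the closure of T(S)
      (0 : A) ∈ closure (Set.range T),
      -- (d) the net (T(s)) converges to 0 in norm
      ∀ ε > (0 : ℝ), ∃ s₀ : S, ∀ s : S, (∃ r : S, s₀ + r = s) → ‖T s‖ ≤ ε,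
      -- (e) some T(s) has norm < 1
      ∃ s : S, ‖T s‖ < 1
    ] := by
  tfae_have 1 → 5 := fun h₁ => by
    by_contra! h₅
    obtain ⟨χ, hχ⟩ := exists_inUniSpec_of_one_le_norm hT h₅
    exact h₁ χ hχ
  tfae_have 5 → 1 := fun ⟨s, hs⟩ => not_inUniSpec_of_norm_lt_one hs
  tfae_have 5 → 2 := fun ⟨s, hs⟩ => ⟨s, tendsto_pow_atTop_nhds_zero_of_norm_lt_one hs⟩
  tfae_have 2 → 5 := fun ⟨s, hs⟩ => by
    obtain ⟨n, hn⟩ := (hs.eventually (Metric.ball_mem_nhds 0 one_pos)).exists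
    exact ⟨n • s, by simpa [hT.1.map_nsmul] using hn⟩
  tfae_have 5 → 4 := fun ⟨s, hs⟩ ε hε => hT.exists_forall_norm_le_of_norm_lt_one hs hε
  tfae_have 4 → 3 := fun h₄ => Metric.mem_closure_iff.2 fun ε hε => by
    obtain ⟨s₀, hs₀⟩ := h₄ (ε / 2) (half_pos hε)
    exact ⟨T s₀, ⟨s₀, rfl⟩, by rw [dist_zero_left]; linarith [hs₀ s₀ ⟨0, add_zero s₀⟩]⟩
  tfae_have 3 → 5 := fun h₃ => by
    obtain ⟨_, ⟨s, rfl⟩, hs⟩ := Metric.mem_closure_iff.1 h₃ 1 one_pos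
    exact ⟨s, by rwa [dist_zero_left] at hs⟩
  tfae_finish

/-- Stability theorem: for a bounded representation `T : S → A` of a
commutative monoid in a unital complex Banach algebra, the following are equivalent:
(a) the unitary spectrum of `T` is empty; (b) `T(s)ⁿ → 0` for some `s`;
(c) `0` lies in the norm closure of `T(S)`; (d) the net `(T(s))_{s∈S}` converges to `0`
in norm along the divisibility direction of `S`; (e) `‖T(s)‖ < 1` for some `s`. -/
theorem stability_tfae {S : Type*} [AddCommMonoid S]
    {A : Type*} [NormedRing A] [NormedAlgebra ℂ A] [CompleteSpace A]
    (T : S → A) (hT : IsBoundedRep T) :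
    List.TFAE [
      -- (a) empty unitary spectrum
      ∀ χ : S → ℂ, ¬ InUniSpec T χ,
      -- (b) some T(s) has powers tending to 0
      ∃ s : S, Tendsto (fun n : ℕ => T s ^ n) atTop (𝓝 0),
      -- (c) 0 belongs to the closure of T(S)
      (0 : A) ∈ closure (Set.range T),
      -- (d) the net (T(s)) converges to 0 in norm
      ∀ ε > (0 : ℝ), ∃ s₀ : S, ∀ s : S, (∃ r : S, s₀ + r = s) → ‖T s‖ ≤ ε,
      -- (e) some T(s) has norm < 1
      ∃ s : S, ‖T s‖ < 1
    ] :=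
  stability_tfae_general T hT
end

section
/- Let S be a commutative monoid, E a complex Banach space, and T : S → L(E) a bounded representation whose fixed space fix(T) is finite-dimensional. Then there exists a bounded linear projection P on E with range fix(T) such that P∘T(s) = T(s)∘P = P for every s ∈ S. -/
/-!
Hahn–Banach with an invariant dominating seminorm. Let `H` be the convex hull of the operators
`T s`: a commutative multiplicative set of operators of norm at most `M`. Then
`q x = sup_{B ∈ H} ‖B x‖` (`hullSupSeminorm`) is an equivalent norm for which every `A ∈ H` is a
contraction, and `p x = inf_{A ∈ H} q (A x)` (`hullInfSeminorm`) is again a seminorm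
(subadditivity uses `A B = B A`). It is at most `M ‖x‖`, it dominates the norm on fixed vectors,
and it vanishes on every `x - T s x`, because the averages `n⁻¹ ∑_{i<n} T (i • s)` send that
vector to `n⁻¹ (x - T (n • s) x)`. A functional `ψ` on `fix(T)` therefore extends to a
functional `φ` on `E` with `‖φ x‖ ≤ ‖ψ‖ p x`, which kills every `x - T s x`. Extending the
coordinate functionals of a basis `bᵢ` of `fix(T)` in this way gives the projection
`P = ∑ᵢ φᵢ(·) bᵢ`.
-/

open Filter Topology

universe u

section ConvexHullAlgebra

variable {𝕜 A : Type*} [CommSemiring 𝕜] [PartialOrder 𝕜] [Semiring A] [Algebra 𝕜 A] {G : Set A}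

theorem mul_mem_convexHull (hG : ∀ a ∈ G, ∀ b ∈ G, a * b ∈ G) {a b : A}
    (ha : a ∈ convexHull 𝕜 G) (hb : b ∈ convexHull 𝕜 G) : a * b ∈ convexHull 𝕜 G := by
  have hright : ∀ g ∈ G, ∀ a ∈ convexHull 𝕜 G, a * g ∈ convexHull 𝕜 G := fun g hg =>
    convexHull_min (fun a ha => subset_convexHull 𝕜 G (hG a ha g hg))
      ((convex_convexHull 𝕜 G).linear_preimage (LinearMap.mulRight 𝕜 g))
  exact convexHull_min (fun g hg => hright g hg a ha)
    ((convex_convexHull 𝕜 G).linear_preimage (LinearMap.mulLeft 𝕜 a)) hb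

theorem convex_setOf_commute (a : A) : Convex 𝕜 {b | Commute a b} :=
  fun _ hb _ hc s t _ _ _ => (hb.smul_right s).add_right (hc.smul_right t)

theorem commute_of_mem_convexHull (hG : ∀ a ∈ G, ∀ b ∈ G, Commute a b) {a b : A}
    (ha : a ∈ convexHull 𝕜 G) (hb : b ∈ convexHull 𝕜 G) : Commute a b := by
  have hleft : ∀ g ∈ G, ∀ a ∈ convexHull 𝕜 G, Commute g a := fun g hg =>
    convexHull_min (hG g hg) (convex_setOf_commute g)
  exact convexHull_min (fun g hg => (hleft g hg a ha).symm) (convex_setOf_commute a) hb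

end ConvexHullAlgebra

theorem norm_le_of_mem_convexHull {F : Type*} [SeminormedAddCommGroup F] [NormedSpace ℝ F]
    {G : Set F} {M : ℝ} (hG : ∀ g ∈ G, ‖g‖ ≤ M) {x : F} (hx : x ∈ convexHull ℝ G) : ‖x‖ ≤ M := by
  simpa using convexHull_min (fun g hg => mem_closedBall_zero_iff.2 (hG g hg))
    (convex_closedBall 0 M) hx

namespace IsRepresentation

variable {S A : Type*} [AddCommMonoid S] [Semiring A] {T : S → A}

theorem mul_mem_range (hT : IsRepresentation T) :
    ∀ a ∈ Set.range T, ∀ b ∈ Set.range T, a * b ∈ Set.range T := by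
  rintro _ ⟨s, rfl⟩ _ ⟨t, rfl⟩
  exact ⟨s + t, hT.2 s t⟩

theorem commute (hT : IsRepresentation T) (s t : S) : Commute (T s) (T t) := by
  rw [Commute, SemiconjBy, ← hT.2, ← hT.2, add_comm]

variable [Algebra ℝ A]

theorem one_mem_convexHull (hT : IsRepresentation T) : 1 ∈ convexHull ℝ (Set.range T) :=
  subset_convexHull ℝ _ ⟨0, hT.1⟩

theorem mul_mem_convexHull (hT : IsRepresentation T) {a b : A}
    (ha : a ∈ convexHull ℝ (Set.range T)) (hb : b ∈ convexHull ℝ (Set.range T)) :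
    a * b ∈ convexHull ℝ (Set.range T) :=
  _root_.mul_mem_convexHull hT.mul_mem_range ha hb

theorem nonempty_convexHull (hT : IsRepresentation T) : Nonempty (convexHull ℝ (Set.range T)) :=
  ⟨⟨1, hT.one_mem_convexHull⟩⟩

theorem commute_of_mem_convexHull (hT : IsRepresentation T) {a b : A}
    (ha : a ∈ convexHull ℝ (Set.range T)) (hb : b ∈ convexHull ℝ (Set.range T)) : Commute a b :=
  _root_.commute_of_mem_convexHull (by rintro _ ⟨s, rfl⟩ _ ⟨t, rfl⟩; exact hT.commute s t) ha hb

end IsRepresentation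

section BoundedRepresentation

variable {S E : Type*} [NormedAddCommGroup E] [NormedSpace ℂ E] {T : S → E →L[ℂ] E}

theorem apply_eq_of_mem_convexHull {z : E} (hz : ∀ s, T s z = z) {B : E →L[ℂ] E}
    (hB : B ∈ convexHull ℝ (Set.range T)) : B z = z := by
  refine convexHull_min (t := {B | B z = z}) (Set.range_subset_iff.2 hz) ?_ hB
  intro B₁ h₁ B₂ h₂ a b _ _ hab
  simp_all [← add_smul]

theorem IsRepresentation.average_apply_sub [AddCommMonoid S] (hT : IsRepresentation T) (s : S)
    (n : ℕ) (x : E) :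
    (∑ i ∈ Finset.range n, (n : ℝ)⁻¹ • T (i • s)) (x - T s x) = (n : ℝ)⁻¹ • (x - T (n • s) x) := by
  have hsucc : ∀ i : ℕ, T (i • s) (T s x) = T ((i + 1) • s) x := fun i => by
    rw [succ_nsmul, hT.2]; rfl
  have hzero : T ((0 : ℕ) • s) x = x := by rw [zero_nsmul, hT.1]; rfl
  simp only [FunLike.coe_sum, Finset.sum_apply, FunLike.coe_smul, Pi.smul_apply, map_sub, hsucc,
    ← Finset.smul_sum]
  rw [← smul_sub, ← Finset.sum_sub_distrib, Finset.sum_range_sub' (fun i => T (i • s) x), hzero]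

theorem average_mem_convexHull {S A : Type*} [AddCommMonoid S] [AddCommGroup A] [Module ℝ A]
    (T : S → A) (s : S) {n : ℕ} (hn : n ≠ 0) :
    ∑ i ∈ Finset.range n, (n : ℝ)⁻¹ • T (i • s) ∈ convexHull ℝ (Set.range T) :=
  (convex_convexHull ℝ _).sum_mem (fun _ _ => by positivity) (by simp [hn])
    fun i _ => subset_convexHull ℝ _ ⟨i • s, rfl⟩

noncomputable def hullSupSeminorm (T : S → E →L[ℂ] E) : Seminorm ℂ E :=
  ⨆ B : convexHull ℝ (Set.range T), (normSeminorm ℂ E).comp (B : E →L[ℂ] E).toLinearMap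

theorem iInf_hullSupSeminorm_smul (a : ℂ) (x : E) :
    ⨅ A : convexHull ℝ (Set.range T), hullSupSeminorm T ((A : E →L[ℂ] E) (a • x)) =
      ‖a‖ * ⨅ A : convexHull ℝ (Set.range T), hullSupSeminorm T ((A : E →L[ℂ] E) x) := by
  simp_rw [map_smul, map_smul_eq_mul]
  rw [Real.mul_iInf_of_nonneg (norm_nonneg a)]

theorem bddBelow_range_hullSupSeminorm (x : E) :
    BddBelow (Set.range fun A : convexHull ℝ (Set.range T) =>
      hullSupSeminorm T ((A : E →L[ℂ] E) x)) :=
  ⟨0, by rintro _ ⟨A, rfl⟩; exact apply_nonneg _ _⟩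

section
variable {M : ℝ} (hM : ∀ s, ‖T s‖ ≤ M)
include hM

theorem norm_apply_le_of_mem_convexHull {B : E →L[ℂ] E} (hB : B ∈ convexHull ℝ (Set.range T))
    (x : E) : ‖B x‖ ≤ M * ‖x‖ :=
  B.le_of_opNorm_le (norm_le_of_mem_convexHull (by rintro _ ⟨s, rfl⟩; exact hM s) hB) x

theorem bddAbove_range_norm_apply (x : E) :
    BddAbove (Set.range fun B : convexHull ℝ (Set.range T) => ‖(B : E →L[ℂ] E) x‖) :=
  ⟨M * ‖x‖, by rintro _ ⟨B, rfl⟩; exact norm_apply_le_of_mem_convexHull hM B.2 x⟩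

theorem hullSupSeminorm_apply (x : E) :
    hullSupSeminorm T x = ⨆ B : convexHull ℝ (Set.range T), ‖(B : E →L[ℂ] E) x‖ := by
  rw [hullSupSeminorm, Seminorm.coe_iSup_eq (Seminorm.bddAbove_range_iff.2
    (bddAbove_range_norm_apply hM)), iSup_apply]
  rfl

theorem norm_apply_le_hullSupSeminorm {B : E →L[ℂ] E} (hB : B ∈ convexHull ℝ (Set.range T))
    (x : E) : ‖B x‖ ≤ hullSupSeminorm T x := by
  rw [hullSupSeminorm_apply hM]
  exact le_ciSup (bddAbove_range_norm_apply hM x) ⟨B, hB⟩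

variable [AddCommMonoid S] (hT : IsRepresentation T)
include hT

theorem hullSupSeminorm_le (x : E) : hullSupSeminorm T x ≤ M * ‖x‖ := by
  have := hT.nonempty_convexHull
  rw [hullSupSeminorm_apply hM]
  exact ciSup_le fun B => norm_apply_le_of_mem_convexHull hM B.2 x

theorem norm_le_hullSupSeminorm (x : E) : ‖x‖ ≤ hullSupSeminorm T x :=
  norm_apply_le_hullSupSeminorm hM hT.one_mem_convexHull x

theorem hullSupSeminorm_apply_le {A : E →L[ℂ] E} (hA : A ∈ convexHull ℝ (Set.range T)) (x : E) :
    hullSupSeminorm T (A x) ≤ hullSupSeminorm T x := by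
  have := hT.nonempty_convexHull
  rw [hullSupSeminorm_apply hM]
  exact ciSup_le fun B => norm_apply_le_hullSupSeminorm hM (hT.mul_mem_convexHull B.2 hA) x

theorem iInf_hullSupSeminorm_add_le (x y : E) :
    ⨅ A : convexHull ℝ (Set.range T), hullSupSeminorm T ((A : E →L[ℂ] E) (x + y)) ≤
      (⨅ A : convexHull ℝ (Set.range T), hullSupSeminorm T ((A : E →L[ℂ] E) x)) +
        ⨅ A : convexHull ℝ (Set.range T), hullSupSeminorm T ((A : E →L[ℂ] E) y) := by
  have := hT.nonempty_convexHull
  refine le_ciInf_add_ciInf fun A B => ?_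
  have hcomm := hT.commute_of_mem_convexHull A.2 B.2
  have hsplit : (A * B : E →L[ℂ] E) (x + y) =
      (B : E →L[ℂ] E) ((A : E →L[ℂ] E) x) + (A : E →L[ℂ] E) ((B : E →L[ℂ] E) y) := by
    rw [map_add]
    exact congrArg (· + _) (congrArg (· x) hcomm.eq)
  calc _ ≤ hullSupSeminorm T ((A * B : E →L[ℂ] E) (x + y)) :=
        ciInf_le (bddBelow_range_hullSupSeminorm _) ⟨_, hT.mul_mem_convexHull A.2 B.2⟩
    _ ≤ _ := hsplit ▸ map_add_le_add _ _ _
    _ ≤ _ :=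
        add_le_add (hullSupSeminorm_apply_le hM hT B.2 _) (hullSupSeminorm_apply_le hM hT A.2 _)

end

noncomputable def hullInfSeminorm [AddCommMonoid S] (hT : IsBoundedRep T) : Seminorm ℂ E :=
  Seminorm.of (fun x => ⨅ A : convexHull ℝ (Set.range T), hullSupSeminorm T ((A : E →L[ℂ] E) x))
    (by obtain ⟨hrep, M, hM⟩ := hT; exact iInf_hullSupSeminorm_add_le hM hrep)
    iInf_hullSupSeminorm_smul

variable [AddCommMonoid S] (hT : IsBoundedRep T)

theorem hullInfSeminorm_le_apply {A : E →L[ℂ] E} (hA : A ∈ convexHull ℝ (Set.range T)) (x : E) :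
    hullInfSeminorm hT x ≤ hullSupSeminorm T (A x) :=
  ciInf_le (bddBelow_range_hullSupSeminorm x) ⟨A, hA⟩

theorem hullInfSeminorm_le {M : ℝ} (hM : ∀ s, ‖T s‖ ≤ M) (x : E) :
    hullInfSeminorm hT x ≤ M * ‖x‖ :=
  (hullInfSeminorm_le_apply hT hT.1.one_mem_convexHull x).trans (hullSupSeminorm_le hM hT.1 x)

theorem norm_le_hullInfSeminorm {z : E} (hz : ∀ s, T s z = z) : ‖z‖ ≤ hullInfSeminorm hT z := by
  obtain ⟨hrep, M, hM⟩ := hT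
  have := hrep.nonempty_convexHull
  refine le_ciInf fun A => ?_
  rw [apply_eq_of_mem_convexHull hz A.2]
  exact norm_le_hullSupSeminorm hM hrep z

theorem hullInfSeminorm_sub_apply (s : S) (x : E) : hullInfSeminorm hT (x - T s x) = 0 := by
  obtain ⟨hrep, M, hM⟩ := hT
  refine le_antisymm (ge_of_tendsto (tendsto_const_div_atTop_nhds_zero_nat (M * ((1 + M) * ‖x‖)))
    (Filter.eventually_atTop.2 ⟨1, fun n hn => ?_⟩)) (apply_nonneg _ _)
  have hM0 : 0 ≤ M := (norm_nonneg _).trans (hM 0)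
  have hn0 : n ≠ 0 := Nat.one_le_iff_ne_zero.1 hn
  calc hullInfSeminorm _ (x - T s x)
      ≤ hullSupSeminorm T ((n : ℝ)⁻¹ • (x - T (n • s) x)) :=
        hrep.average_apply_sub s n x ▸ hullInfSeminorm_le_apply _ (average_mem_convexHull T s hn0) _
    _ ≤ M * ((n : ℝ)⁻¹ * ((1 + M) * ‖x‖)) := by
        refine (hullSupSeminorm_le hM hrep _).trans (mul_le_mul_of_nonneg_left ?_ hM0)
        rw [norm_smul, Real.norm_of_nonneg (by positivity)]
        refine mul_le_mul_of_nonneg_left ((norm_sub_le _ _).trans ?_) (by positivity)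
        linarith [(T (n • s)).le_of_opNorm_le (hM (n • s)) x]
    _ = M * ((1 + M) * ‖x‖) / n := by field_simp

end BoundedRepresentation

theorem IsBoundedRep.exists_invariant_extension {S E : Type*} [AddCommMonoid S]
    [NormedAddCommGroup E] [NormedSpace ℂ E] {T : S → E →L[ℂ] E} (hT : IsBoundedRep T)
    {F : Submodule ℂ E} (hF : ∀ z ∈ F, ∀ s, T s z = z) (ψ : StrongDual ℂ F) :
    ∃ φ : StrongDual ℂ E, (∀ s, φ.comp (T s) = φ) ∧ ∀ z : F, φ z = ψ z := by
  obtain ⟨M, hM⟩ := hT.2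
  obtain ⟨g, hgψ, hg⟩ := Module.Dual.exists_extension_of_le_seminorm F ψ.toLinearMap
    (p := ‖ψ‖₊ • hullInfSeminorm hT) fun z =>
      ψ.le_opNorm_of_le (norm_le_hullInfSeminorm hT (hF z z.2))
  have hgp : ∀ x, ‖g x‖ ≤ ‖ψ‖ * hullInfSeminorm hT x := hg
  refine ⟨g.mkContinuous (‖ψ‖ * M) fun x => (hgp x).trans ?_, fun s => ?_, hgψ⟩
  · rw [mul_assoc]
    exact mul_le_mul_of_nonneg_left (hullInfSeminorm_le hT hM x) (norm_nonneg ψ)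
  · ext x
    have := hgp (x - T s x)
    rw [hullInfSeminorm_sub_apply, mul_zero, norm_le_zero_iff, map_sub, sub_eq_zero] at this
    exact this.symm

theorem exists_projection_of_forall_exists_extension {𝕜 E : Type*} [NontriviallyNormedField 𝕜]
    [CompleteSpace 𝕜] [NormedAddCommGroup E] [NormedSpace 𝕜 E] (F : Submodule 𝕜 E)
    [FiniteDimensional 𝕜 F] (R : StrongDual 𝕜 E → Prop)
    (hR : ∀ ψ : StrongDual 𝕜 F, ∃ φ, R φ ∧ ∀ z : F, φ z = ψ z) :
    ∃ P : E →L[𝕜] E, IsIdempotentElem P ∧ LinearMap.range (P : E →ₗ[𝕜] E) = F ∧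
      ∀ A : E →L[𝕜] E, (∀ φ, R φ → φ.comp A = φ) → P * A = P := by
  let b := Module.finBasis 𝕜 F
  choose φ hφR hφ using fun i => hR (b.coord i).toContinuousLinearMap
  let P : E →L[𝕜] E := ∑ i, (φ i).smulRight (b i : E)
  have hP : ∀ x, P x = ∑ i, φ i x • (b i : E) := fun x => by simp [P]
  have hPF : ∀ x, P x ∈ F := fun x => hP x ▸ F.sum_mem fun i _ => F.smul_mem _ (b i).2
  have hPz : ∀ z : F, P z = z := fun z => by
    simp only [hP, hφ, LinearMap.coe_toContinuousLinearMap', Module.Basis.coord_apply]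
    exact_mod_cast b.sum_repr z
  refine ⟨P, ContinuousLinearMap.ext fun x => hPz ⟨P x, hPF x⟩, le_antisymm ?_ fun z hz =>
    ⟨z, hPz ⟨z, hz⟩⟩, fun A hA => ContinuousLinearMap.ext fun x => ?_⟩
  · rintro _ ⟨x, rfl⟩
    exact hPF x
  · show P (A x) = P x
    simp only [hP, ← ContinuousLinearMap.comp_apply, hA _ (hφR _)]

theorem mem_iInf_ker_sub_one {S 𝕜 E : Type*} [Ring 𝕜] [AddCommGroup E] [Module 𝕜 E]
    [TopologicalSpace E] [IsTopologicalAddGroup E] {T : S → E →L[𝕜] E} {z : E} :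
    z ∈ (⨅ s : S, LinearMap.ker ((T s - (1 : E →L[𝕜] E) : E →L[𝕜] E) : E →ₗ[𝕜] E) : Submodule 𝕜 E) ↔
      ∀ s, T s z = z := by
  simp [sub_eq_zero]

theorem exists_invariant_projection_onto_fix_general {S : Type*} [AddCommMonoid S]
    {E : Type*} [NormedAddCommGroup E] [NormedSpace ℂ E]
    (T : S → E →L[ℂ] E) (hT : IsBoundedRep T)
    (hfin : FiniteDimensional ℂ (⨅ s : S, LinearMap.ker ((T s - (1 : E →L[ℂ] E) : E →L[ℂ] E) : E →ₗ[ℂ] E) : Submodule ℂ E)) :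
    ∃ P : E →L[ℂ] E, P * P = P ∧
      LinearMap.range (P : E →ₗ[ℂ] E) = (⨅ s : S, LinearMap.ker ((T s - (1 : E →L[ℂ] E) : E →L[ℂ] E) : E →ₗ[ℂ] E) : Submodule ℂ E) ∧
      ∀ s : S, P * T s = P ∧ T s * P = P := by
  obtain ⟨P, hPP, hrange, hinv⟩ := exists_projection_of_forall_exists_extension _
    (fun φ => ∀ s, φ.comp (T s) = φ)
    fun ψ => hT.exists_invariant_extension (fun z hz => mem_iInf_ker_sub_one.1 hz) ψ
  refine ⟨P, hPP, hrange, fun s => ⟨hinv _ fun φ hφ => hφ s, ?_⟩⟩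
  ext x
  exact mem_iInf_ker_sub_one.1 (hrange ▸ LinearMap.mem_range_self (P : E →ₗ[ℂ] E) x) s

/-- If `T : S → L(E)` is a bounded representation on a complex Banach
space whose fixed space `fix(T) = {x | T(s)x = x for all s}` is finite-dimensional, then
there is a bounded linear projection `P` on `E` with range `fix(T)` satisfying
`P ∘ T(s) = T(s) ∘ P = P` for every `s ∈ S`. -/
theorem exists_invariant_projection_onto_fix {S : Type*} [AddCommMonoid S]
    {E : Type*} [NormedAddCommGroup E] [NormedSpace ℂ E] [CompleteSpace E]
    (T : S → E →L[ℂ] E) (hT : IsBoundedRep T)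
    (hfin : FiniteDimensional ℂ (⨅ s : S, LinearMap.ker ((T s - (1 : E →L[ℂ] E) : E →L[ℂ] E) : E →ₗ[ℂ] E) : Submodule ℂ E)) :
    ∃ P : E →L[ℂ] E, P * P = P ∧
      LinearMap.range (P : E →ₗ[ℂ] E) = (⨅ s : S, LinearMap.ker ((T s - (1 : E →L[ℂ] E) : E →L[ℂ] E) : E →ₗ[ℂ] E) : Submodule ℂ E) ∧
      ∀ s : S, P * T s = P ∧ T s * P = P :=
  exists_invariant_projection_onto_fix_general T hT hfin
end

section
/- Let (X,d) be a complete metric space, J a directed set, and (x_j)_{j∈J} a net in X. Assume that for every ε > 0 there exist a nonempty finite subset F ⊆ X and an index j₀ ∈ J such that min_{x∈F} d(x_j, x) ≤ ε for every j ≥ j₀. Then the net (x_j)_{j∈J} has a subnet that converges in X; equivalently, (x_j)_{j∈J} has a cluster point in X. -/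
open Filter Topology

universe u

/-! The hypothesis says that the image filter of the net's tails is totally bounded. Any
ultrafilter finer than a totally bounded filter is Cauchy, so in a complete space it converges,
and its limit is a cluster point of the net. -/

theorem Metric.filter_totallyBounded_of_eventually_dist_le {X : Type*} [PseudoMetricSpace X]
    {f : Filter X} (h : ∀ ε > 0, ∃ t : Set X, t.Finite ∧ ∀ᶠ a in f, ∃ y ∈ t, dist a y ≤ ε) :
    f.TotallyBounded := by
  intro d hd
  obtain ⟨ε, hε, hεd⟩ := Metric.mem_uniformity_dist.1 hd
  obtain ⟨t, ht, hft⟩ := h (ε / 2) (half_pos hε)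
  refine ⟨t, ht, hft.mono fun a ⟨y, hy, hay⟩ => ⟨y, hy, hεd ?_⟩⟩
  linarith

namespace DirIdx

variable (D : DirIdx.{u})

def atTop : Filter D.J := ⨅ j₀, 𝓟 {j | D.r j₀ j}

theorem mem_atTop_iff {s : Set D.J} : s ∈ D.atTop ↔ ∃ j₀, {j | D.r j₀ j} ⊆ s := by
  have : Nonempty D.J := D.nonempty
  refine (mem_iInf_of_directed (fun a b => ?_) s).trans (by simp only [mem_principal])
  obtain ⟨k, hak, hbk⟩ := D.directed a b
  exact ⟨k, principal_mono.2 fun j hj => D.trans hak hj,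
    principal_mono.2 fun j hj => D.trans hbk hj⟩

theorem eventually_atTop {p : D.J → Prop} : (∀ᶠ j in D.atTop, p j) ↔ ∃ j₀, ∀ j, D.r j₀ j → p j :=
  D.mem_atTop_iff

theorem frequently_atTop {p : D.J → Prop} : (∃ᶠ j in D.atTop, p j) ↔ ∀ j₀, ∃ j, D.r j₀ j ∧ p j := by
  simp only [Filter.Frequently, eventually_atTop, not_exists, not_forall, not_not, exists_prop]

instance atTop_neBot : D.atTop.NeBot :=
  frequently_true_iff_neBot _ |>.1 <| D.frequently_atTop.2 fun j₀ => ⟨j₀, D.refl j₀, trivial⟩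

end DirIdx

/-- Let `(X,d)` be a complete metric space and `(x_j)` a net in `X` such
that for every `ε > 0` there is a nonempty finite set `F ⊆ X` and an index `j₀` with
`min_{y ∈ F} d(x_j, y) ≤ ε` for all `j ≥ j₀`.  Then the net has a cluster point in `X`
(equivalently, a convergent subnet). -/
theorem net_clusterPoint_of_finite_approx {X : Type*} [MetricSpace X] [CompleteSpace X]
    (D : DirIdx.{u}) (x : D.J → X)
    (h : ∀ ε > (0 : ℝ), ∃ F : Finset X, F.Nonempty ∧
      ∃ j₀ : D.J, ∀ j : D.J, D.r j₀ j → ∃ y ∈ F, dist (x j) y ≤ ε) :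
    ∃ p : X, ∀ ε > (0 : ℝ), ∀ j₀ : D.J, ∃ j : D.J, D.r j₀ j ∧ dist (x j) p ≤ ε := by
  have hx : (map x D.atTop).TotallyBounded :=
    Metric.filter_totallyBounded_of_eventually_dist_le fun ε hε =>
      let ⟨F, _, j₀, hF⟩ := h ε hε
      ⟨F, F.finite_toSet, D.eventually_atTop.2 ⟨j₀, hF⟩⟩
  obtain ⟨p, hp⟩ := hx.exists_clusterPt
  exact ⟨p, fun ε hε => D.frequently_atTop.1 (hp.frequently (Metric.closedBall_mem_nhds p hε))⟩
end

section
/- Let S be a commutative monoid, E a complex Banach space, and T : S → L(E) a bounded representation such that the constant-one character 𝟙_S does not belong to σ_uni(T). Then there exist finitely many elements s₁,…,sₙ ∈ S such that E = range(id − T(s₁)) + ⋯ + range(id − T(sₙ)). -/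
open Filter Topology

universe u

/-!
If `𝟙_S ∉ σ_uni(T)`, some finite family witnesses `‖∑ βₖ T(sₖ)‖ < |∑ βₖ|`. Then `∑ βₖ` lies
outside the spectrum of `∑ βₖ T(sₖ)` (Neumann series), so
`(∑ βₖ) • id - ∑ βₖ T(sₖ) = ∑ βₖ (id - T(sₖ))` is invertible, and in particular surjective;
its range is contained in the sum of the ranges of the `id - T(sₖ)`.
-/

theorem isUnitaryChar_one {S : Type*} [AddCommMonoid S] :
    IsUnitaryChar (fun _ : S => (1 : ℂ)) :=
  ⟨rfl, fun _ _ => (one_mul 1).symm, fun _ => norm_one⟩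

theorem exists_norm_sum_smul_lt_of_one_not_mem_uniSpec {S : Type*} [AddCommMonoid S]
    {A : Type*} [NormedRing A] [NormedAlgebra ℂ A] {T : S → A}
    (h : ¬ InUniSpec T (fun _ : S => (1 : ℂ))) :
    ∃ (n : ℕ) (s : Fin n → S) (β : Fin n → ℂ), ‖∑ k, β k • T (s k)‖ < ‖∑ k, β k‖ := by
  simpa [InUniSpec, isUnitaryChar_one] using h

theorem Finset.sum_smul_one_sub {ι R A : Type*} [CommSemiring R] [Ring A] [Algebra R A]
    (s : Finset ι) (β : ι → R) (a : ι → A) :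
    ∑ i ∈ s, β i • (1 - a i) = algebraMap R A (∑ i ∈ s, β i) - ∑ i ∈ s, β i • a i := by
  simp only [smul_sub, Finset.sum_sub_distrib, map_sum, Algebra.algebraMap_eq_smul_one]

theorem LinearMap.iSup_range_eq_top_of_surjective_sum_smul {ι R M N : Type*} [Fintype ι]
    [CommSemiring R] [AddCommMonoid M] [AddCommMonoid N] [Module R M] [Module R N]
    (f : ι → M →ₗ[R] N) (β : ι → R) (h : Function.Surjective ⇑(∑ i, β i • f i)) :
    ⨆ i, LinearMap.range (f i) = ⊤ := by
  refine eq_top_iff.mpr fun y _ => ?_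
  obtain ⟨x, rfl⟩ := h y
  rw [LinearMap.sum_apply]
  exact Submodule.sum_mem_iSup fun i => Submodule.smul_mem _ _ (LinearMap.mem_range_self _ x)

theorem range_sum_eq_top_of_one_not_mem_uniSpec_general {S : Type*} [AddCommMonoid S]
    {E : Type*} [NormedAddCommGroup E] [NormedSpace ℂ E] [CompleteSpace E]
    (T : S → E →L[ℂ] E)
    (h : ¬ InUniSpec T (fun _ : S => (1 : ℂ))) :
    ∃ (n : ℕ) (s : Fin n → S),
      (⨆ k : Fin n, LinearMap.range (((1 : E →L[ℂ] E) - T (s k) : E →L[ℂ] E) : E →ₗ[ℂ] E)) = ⊤ := by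
  obtain ⟨n, s, β, hlt⟩ := exists_norm_sum_smul_lt_of_one_not_mem_uniSpec h
  refine ⟨n, s, LinearMap.iSup_range_eq_top_of_surjective_sum_smul _ β ?_⟩
  -- `E →L[ℂ] E` is no `NormOneClass` when `E` is trivial, hence the factor `‖1‖ ≤ 1`.
  have hres : ∑ k, β k ∈ resolventSet ℂ (∑ k, β k • T (s k)) :=
    spectrum.mem_resolventSet_of_norm_lt_mul <|
      (mul_le_of_le_one_right (norm_nonneg _) ContinuousLinearMap.norm_id_le).trans_lt hlt
  rw [spectrum.mem_resolventSet_iff, ← Finset.sum_smul_one_sub,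
    ContinuousLinearMap.isUnit_iff_bijective] at hres
  simpa only [← ContinuousLinearMap.toLinearMap_smul, ← ContinuousLinearMap.toLinearMap_sum,
    ContinuousLinearMap.coe_coe] using hres.surjective

/-- If the constant-one character `𝟙_S` does not belong to the unitary
spectrum of a bounded representation `T : S → L(E)`, then there are finitely many
`s₁, …, sₙ ∈ S` with `E = range(id − T(s₁)) + ⋯ + range(id − T(sₙ))`. -/
theorem range_sum_eq_top_of_one_not_mem_uniSpec {S : Type*} [AddCommMonoid S]
    {E : Type*} [NormedAddCommGroup E] [NormedSpace ℂ E] [CompleteSpace E]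
    (T : S → E →L[ℂ] E) (hT : IsBoundedRep T)
    (h : ¬ InUniSpec T (fun _ : S => (1 : ℂ))) :
    ∃ (n : ℕ) (s : Fin n → S),
      (⨆ k : Fin n, LinearMap.range (((1 : E →L[ℂ] E) - T (s k) : E →L[ℂ] E) : E →ₗ[ℂ] E)) = ⊤ :=
  range_sum_eq_top_of_one_not_mem_uniSpec_general T h
end
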